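/- Let X be a finite set and let A be an abelian subgroup of Sym(X). Then A is the automorphism group of some k-coloured digraph on X for some k ≥ 1 if and only if A is the automorphism group of some 4-coloured digraph on X (that is, A ∈ DGR if and only if A ∈ DGR(4)). -/

import Mathlib

/-- The orbit of a point `x` under a set `G` of permutations of `X`. -/
def orbitOf {X : Type*} (G : Set (Equiv.Perm X)) (x : X) : Set X :=
  {y | ∃ a ∈ G, a x = y}

/-- A permutation `σ` is 2-orbit-compatible with `G` if for every pair of orbits
`O` and `Q` of `G` there is an element of `G` agreeing with `σ` on `O ∪ Q`. -/
def TwoOrbitCompatible {X : Type*} (G : Set (Equiv.Perm X)) (σ : Equiv.Perm X) : Prop :=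
  ∀ x y : X, ∃ a ∈ G, ∀ z ∈ orbitOf G x ∪ orbitOf G y, σ z = a z

/-- A subgroup `A ≤ Sym(X)` is 2-orbit-closed if every permutation that is
2-orbit-compatible with `A` belongs to `A`. -/
def TwoOrbitClosed {X : Type*} (A : Subgroup (Equiv.Perm X)) : Prop :=
  ∀ σ : Equiv.Perm X, TwoOrbitCompatible (A : Set (Equiv.Perm X)) σ → σ ∈ A

/-- `A` is precisely the automorphism group of the `k`-coloured digraph `γ` on `X`. -/
def IsColDigraphAutGroup {X : Type*} {k : ℕ} (γ : X → X → Fin k)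
    (A : Subgroup (Equiv.Perm X)) : Prop :=
  ∀ σ : Equiv.Perm X, σ ∈ A ↔ ∀ x y : X, x ≠ y → γ (σ x) (σ y) = γ x y

/-- `A ∈ DGR`: `A` is the automorphism group of some coloured digraph on `X`. -/
def InDGR {X : Type*} (A : Subgroup (Equiv.Perm X)) : Prop :=
  ∃ k : ℕ, 1 ≤ k ∧ ∃ γ : X → X → Fin k, IsColDigraphAutGroup γ A

/-- `A ∈ DGR(4)`: `A` is the automorphism group of some 4-coloured digraph on `X`. -/
def InDGR4 {X : Type*} (A : Subgroup (Equiv.Perm X)) : Prop :=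
  ∃ γ : X → X → Fin 4, IsColDigraphAutGroup γ A

/-!
Each orbit `O` of the abelian group `A` is a regular orbit of the finite abelian group
`A / A_x ≅ ∏ ZMod (n t)`, so `O` can be identified with `∏ ZMod (n t)` in such a way that `A` acts
by translations. Inside `O` we colour the pair `(x, y)` by the Cayley colouring of `y - x` with
respect to the generators `e₀` (colour 1), `eₜ` for `t ≠ 0` (colour 3) and `eₜ₊₁ - eₜ` (colour 2);
a bijection of `∏ ZMod (n t)` preserving these colours is a translation. Between two orbits we fix
base points and a linear order of the orbits, and colour the images `(a b_O, a b_Q)` of the base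
points under a common `a ∈ A` by 3 if `O < Q` and by 2 if `O > Q`; every other pair gets colour 0.

A pair coloured 3 one way and 2 the other way is then exactly an upward pair of images of base
points, so an automorphism `σ` of this 4-coloured digraph preserves each orbit, acts on it as an
element of `A`, and agrees with a single `c ∈ A` on the base points of any two orbits; since `A`
is abelian, `c` then agrees with `σ` on both orbits. Hence every automorphism is 2-orbit-compatible
with `A`. Finally, if `A` is the automorphism group of some coloured digraph `γ`, every
2-orbit-compatible permutation preserves `γ`, so `A` is the automorphism group of our digraph.
-/

open Function

theorem eq_of_periodic_of_closure_eq_top {G β : Type*} [AddGroup G] {F : G → β} {s : Set G}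
    (hs : AddSubgroup.closure s = ⊤) (hF : ∀ c ∈ s, Periodic F c) (x y : G) : F x = F y := by
  have hper : ∀ c ∈ AddSubgroup.closure s, Periodic F c := fun c hc =>
    AddSubgroup.closure_induction hF (fun _ => by rw [add_zero])
      (fun _ _ _ _ h₁ h₂ => h₁.add_period h₂) (fun _ _ h => h.neg) hc
  simpa using (hper (-x + y) (hs ▸ AddSubgroup.mem_top _) x).symm

theorem natCast_eq_natCast_of_le_two {m a b : ℕ} (hm : 2 ≤ m) (ha : a ≤ 2) (hb : b ≤ 2)
    (h : (a : ZMod m) = b) : a = b ∨ a + b = 2 := by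
  rw [ZMod.natCast_eq_natCast_iff'] at h
  rcases hm.eq_or_lt with rfl | hm
  · omega
  · rw [Nat.mod_eq_of_lt (by omega), Nat.mod_eq_of_lt (by omega)] at h
    exact Or.inl h

theorem AddCommGroup.exists_addEquiv_pi_zmod (G : Type*) [AddCommGroup G] [Finite G] :
    ∃ (r : ℕ) (n : Fin r → ℕ), (∀ t, 2 ≤ n t) ∧ Nonempty (G ≃+ ∀ t, ZMod (n t)) := by
  obtain ⟨ι, _, n, hn, ⟨e⟩⟩ := AddCommGroup.equiv_directSum_zmod_of_finite' G
  let κ := Fintype.equivFin ι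
  exact ⟨_, fun t => n (κ.symm t), fun t => hn _,
    ⟨e.trans ((DirectSum.addEquivProd _).trans (RingEquiv.piCongrLeft' _ κ).toAddEquiv)⟩⟩

section CayleyColouring

variable {r : ℕ} {n : Fin r → ℕ}

def unitVec (n : Fin r → ℕ) (t : Fin r) : ∀ s, ZMod (n s) := Pi.single t 1

theorem closure_range_unitVec : AddSubgroup.closure (Set.range (unitVec n)) = ⊤ := by
  refine eq_top_iff.2 fun w _ => ?_
  rw [← Finset.univ_sum_single w]
  refine AddSubgroup.sum_mem _ fun t _ => ?_
  have : Pi.single t (w t) = (ZMod.cast (w t) : ℤ) • unitVec n t := by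
    rw [unitVec, ← Pi.single_smul, zsmul_one, ZMod.intCast_zmod_cast]
  exact this ▸ AddSubgroup.zsmul_mem _ (AddSubgroup.subset_closure (Set.mem_range_self t)) _

theorem sum_map_unitVec_apply (L : List (Fin r)) (u : Fin r) :
    (L.map (unitVec n)).sum u = L.count u := by
  induction L with
  | nil => simp
  | cons t L ih =>
    by_cases h : t = u
    · subst h
      simp [ih, unitVec, add_comm]
    · simp [ih, unitVec, h, Ne.symm h]

/-- The second alternative accounts for coordinates with `n u = 2`, where `eᵤ + eᵤ = 0`. -/
theorem count_eq_or_of_sum_map_unitVec_eq (hn : ∀ t, 2 ≤ n t) {L L' : List (Fin r)}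
    (hL : L.length ≤ 2) (hL' : L'.length ≤ 2)
    (h : (L.map (unitVec n)).sum = (L'.map (unitVec n)).sum) (u : Fin r) :
    L.count u = L'.count u ∨ L.count u + L'.count u = 2 := by
  refine natCast_eq_natCast_of_le_two (hn u) (L.count_le_length.trans hL)
    (L'.count_le_length.trans hL') ?_
  rw [← sum_map_unitVec_apply, ← sum_map_unitVec_apply, h]

theorem unitVec_ne_zero (hn : ∀ t, 2 ≤ n t) (t : Fin r) : unitVec n t ≠ 0 := by
  intro h
  have := count_eq_or_of_sum_map_unitVec_eq hn (L := [t]) (L' := []) (by simp) (by simp)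
    (by simpa using h) t
  simp at this

theorem unitVec_injective (hn : ∀ t, 2 ≤ n t) : Injective (unitVec n) := by
  intro s t h
  have hs := count_eq_or_of_sum_map_unitVec_eq hn (L := [s]) (L' := [t]) (by simp) (by simp)
    (by simpa using h) s
  simp only [List.count_cons, List.count_nil, beq_iff_eq] at hs
  grind

theorem unitVec_add_unitVec_ne (hn : ∀ t, 2 ≤ n t) (p q s : Fin r) :
    unitVec n p + unitVec n q ≠ unitVec n s := by
  intro h
  have H := count_eq_or_of_sum_map_unitVec_eq hn (L := [p, q]) (L' := [s]) (by simp) (by simp)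
    (by simpa using h)
  have hp := H p
  have hq := H q
  have hs := H s
  simp only [List.count_cons, List.count_nil, beq_iff_eq] at hp hq hs
  grind

theorem unitVec_add_unitVec_eq_cases (hn : ∀ t, 2 ≤ n t) {p q s t : Fin r}
    (h : unitVec n p + unitVec n q = unitVec n s + unitVec n t) :
    (p = s ∧ q = t) ∨ (p = t ∧ q = s) ∨ (p = q ∧ s = t) := by
  have H := count_eq_or_of_sum_map_unitVec_eq hn (L := [p, q]) (L' := [s, t]) (by simp) (by simp)
    (by simpa using h)
  have hp := H p
  have hq := H q
  have hs := H s
  have ht := H t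
  simp only [List.count_cons, List.count_nil, beq_iff_eq] at hp hq hs ht
  grind

open Classical in
noncomputable def cayleyColour (n : Fin r → ℕ) (w : ∀ t, ZMod (n t)) : Fin 4 :=
  if ∃ t : Fin r, (t : ℕ) = 0 ∧ w = unitVec n t then 1
  else if ∃ s t : Fin r, (t : ℕ) = s + 1 ∧ w = unitVec n t - unitVec n s then 2
  else if ∃ t : Fin r, (t : ℕ) ≠ 0 ∧ w = unitVec n t then 3
  else 0

theorem cayleyColour_unitVec (hn : ∀ t, 2 ≤ n t) (t : Fin r) :
    cayleyColour n (unitVec n t) = if (t : ℕ) = 0 then 1 else 3 := by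
  by_cases h0 : (t : ℕ) = 0
  · rw [cayleyColour, if_pos ⟨t, h0, rfl⟩, if_pos h0]
  · have not_one : ¬ ∃ u : Fin r, (u : ℕ) = 0 ∧ unitVec n t = unitVec n u := by
      rintro ⟨u, hu, h⟩
      exact h0 (unitVec_injective hn h ▸ hu)
    have not_two : ¬ ∃ s u : Fin r, (u : ℕ) = s + 1 ∧ unitVec n t = unitVec n u - unitVec n s := by
      rintro ⟨s, u, -, h⟩
      exact unitVec_add_unitVec_ne hn t s u (eq_sub_iff_add_eq.1 h)
    rw [cayleyColour, if_neg not_one, if_neg not_two, if_pos ⟨t, h0, rfl⟩, if_neg h0]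

theorem cayleyColour_eq_two_iff (hn : ∀ t, 2 ≤ n t) {w : ∀ t, ZMod (n t)} :
    cayleyColour n w = 2 ↔ ∃ s t : Fin r, (t : ℕ) = s + 1 ∧ w = unitVec n t - unitVec n s := by
  by_cases h1 : ∃ t : Fin r, (t : ℕ) = 0 ∧ w = unitVec n t
  · obtain ⟨u, hu, rfl⟩ := h1
    rw [cayleyColour_unitVec hn, if_pos hu]
    refine iff_of_false (by decide) ?_
    rintro ⟨s, t, -, h⟩
    exact unitVec_add_unitVec_ne hn u s t (eq_sub_iff_add_eq.1 h)
  · rw [cayleyColour, if_neg h1]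
    split_ifs with h2
    · exact iff_of_true rfl h2
    · exact iff_of_false (by decide) h2
    · exact iff_of_false (by decide) h2

theorem exists_unitVec_of_cayleyColour_eq_one {w : ∀ t, ZMod (n t)} (h : cayleyColour n w = 1) :
    ∃ t : Fin r, (t : ℕ) = 0 ∧ w = unitVec n t := by
  unfold cayleyColour at h
  split_ifs at h with h1 <;> first | exact h1 | exact absurd h (by decide)

theorem exists_unitVec_of_cayleyColour_eq_three {w : ∀ t, ZMod (n t)}
    (h : cayleyColour n w = 3) : ∃ t : Fin r, (t : ℕ) ≠ 0 ∧ w = unitVec n t := by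
  unfold cayleyColour at h
  split_ifs at h with h1 h2 h3 <;> first | exact h3 | exact absurd h (by decide)

theorem exists_unitVec_of_cayleyColour_eq_cayleyColour_unitVec (hn : ∀ t, 2 ≤ n t)
    {w : ∀ t, ZMod (n t)} {t : Fin r} (h : cayleyColour n w = cayleyColour n (unitVec n t)) :
    ∃ j : Fin r, w = unitVec n j ∧ ((j : ℕ) = 0 ↔ (t : ℕ) = 0) := by
  rw [cayleyColour_unitVec hn] at h
  split_ifs at h with ht
  · obtain ⟨j, hj, rfl⟩ := exists_unitVec_of_cayleyColour_eq_one h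
    exact ⟨j, rfl, iff_of_true hj ht⟩
  · obtain ⟨j, hj, rfl⟩ := exists_unitVec_of_cayleyColour_eq_three h
    exact ⟨j, rfl, iff_of_false hj ht⟩

theorem cayleyColour_neg_ne_two (hn : ∀ t, 2 ≤ n t) {w : ∀ t, ZMod (n t)}
    (h : cayleyColour n w = 3) : cayleyColour n (-w) ≠ 2 := by
  obtain ⟨j, -, rfl⟩ := exists_unitVec_of_cayleyColour_eq_three h
  rw [Ne, cayleyColour_eq_two_iff hn]
  rintro ⟨s, t, -, h⟩
  exact unitVec_add_unitVec_ne hn t j s (by rw [← neg_sub, neg_inj] at h; rw [h]; abel)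

theorem map_add_unitVec_of_cayleyColour (hn : ∀ t, 2 ≤ n t)
    {f : (∀ t, ZMod (n t)) → ∀ t, ZMod (n t)} (hf : Injective f)
    (hc : ∀ x y, x ≠ y → cayleyColour n (f y - f x) = cayleyColour n (y - x))
    (t : Fin r) (x : ∀ t, ZMod (n t)) : f (x + unitVec n t) = f x + unitVec n t := by
  induction t using WellFoundedLT.induction generalizing x with
  | _ t IH =>
  obtain ⟨j, hj, hjt⟩ := exists_unitVec_of_cayleyColour_eq_cayleyColour_unitVec hn <|
    (hc x (x + unitVec n t) (by simpa using unitVec_ne_zero hn t)).trans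
      (by rw [add_sub_cancel_left])
  have hfj : f (x + unitVec n t) = f x + unitVec n j := eq_add_of_sub_eq' hj
  suffices j = t by rw [hfj, this]
  by_cases h0 : (t : ℕ) = 0
  · exact Fin.ext ((hjt.2 h0).trans h0.symm)
  -- With `t = m + 1`, the colour-2 pair `(x + eₘ, x + eₜ)` leaves `j = t` as the only option.
  obtain ⟨M, hM⟩ := Nat.exists_eq_succ_of_ne_zero h0
  set s : Fin r := ⟨M, by omega⟩
  have hst : s ≠ t := Fin.ne_of_val_ne (by simp [s, hM])
  have hs : f (x + unitVec n s) = f x + unitVec n s := IH s (Fin.lt_def.2 (by simp [s, hM])) x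
  obtain ⟨l, l', hl, h⟩ := (cayleyColour_eq_two_iff hn).1 <|
    (hc _ _ ((add_right_injective x).ne ((unitVec_injective hn).ne hst))).trans <| by
      rw [add_sub_add_left_eq_sub, cayleyColour_eq_two_iff hn]
      exact ⟨s, t, hM, rfl⟩
  rw [hs, hfj, add_sub_add_left_eq_sub, sub_eq_sub_iff_add_eq_add] at h
  rcases unitVec_add_unitVec_eq_cases hn h with ⟨rfl, rfl⟩ | ⟨rfl, rfl⟩ | ⟨rfl, rfl⟩
  · ext
    simp only [s] at hl
    omega
  · omega
  · have hjt : j < t := Fin.lt_def.2 (by simp only [s] at hl; omega)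
    exact unitVec_injective hn (add_left_cancel (hf ((IH j hjt x).trans hfj.symm)))

theorem eq_add_of_cayleyColour (hn : ∀ t, 2 ≤ n t) {f : (∀ t, ZMod (n t)) → ∀ t, ZMod (n t)}
    (hf : Injective f) (hc : ∀ x y, x ≠ y → cayleyColour n (f y - f x) = cayleyColour n (y - x))
    (x : ∀ t, ZMod (n t)) : f x = f 0 + x := by
  have := eq_of_periodic_of_closure_eq_top closure_range_unitVec (F := fun x => f x - x) ?_ 0 x
  · rw [sub_zero] at this
    rw [this, sub_add_cancel]
  · rintro _ ⟨t, rfl⟩ y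
    simp only [map_add_unitVec_of_cayleyColour hn hf hc]
    abel

theorem eq_of_cayleyColour_ne_zero (hn : ∀ t, 2 ≤ n t) {β : Type*}
    {F : (∀ t, ZMod (n t)) → β}
    (hF : ∀ x y, x ≠ y → cayleyColour n (y - x) ≠ 0 → F x = F y) (x y : ∀ t, ZMod (n t)) :
    F x = F y := by
  refine eq_of_periodic_of_closure_eq_top closure_range_unitVec ?_ x y
  rintro _ ⟨t, rfl⟩ z
  refine (hF z _ (by simpa using unitVec_ne_zero hn t) ?_).symm
  rw [add_sub_cancel_left, cayleyColour_unitVec hn]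
  split_ifs <;> decide

end CayleyColouring

section Orbits

variable {X : Type*} {A : Subgroup (Equiv.Perm X)}

theorem mem_orbitOf_self (x : X) : x ∈ orbitOf A x := ⟨1, A.one_mem, rfl⟩

theorem apply_mem_orbitOf {a : Equiv.Perm X} (ha : a ∈ A) (x : X) : a x ∈ orbitOf A x :=
  ⟨a, ha, rfl⟩

theorem orbitOf_eq_of_mem {x y : X} (h : y ∈ orbitOf A x) : orbitOf A y = orbitOf A x := by
  obtain ⟨a, ha, rfl⟩ := h
  ext z
  constructor
  · rintro ⟨b, hb, rfl⟩
    exact ⟨b * a, A.mul_mem hb ha, rfl⟩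
  · rintro ⟨b, hb, rfl⟩
    exact ⟨b * a⁻¹, A.mul_mem hb (A.inv_mem ha), by simp⟩

theorem orbitOf_eq_iff_mem {x y : X} : orbitOf A y = orbitOf A x ↔ y ∈ orbitOf A x :=
  ⟨fun h => h ▸ mem_orbitOf_self y, orbitOf_eq_of_mem⟩

theorem eqOn_orbitOf_of_apply_eq (hab : ∀ a ∈ A, ∀ b ∈ A, a * b = b * a)
    {σ b c : Equiv.Perm X} (hb : b ∈ A) (hc : c ∈ A) {p : X}
    (hbσ : Set.EqOn σ b (orbitOf A p)) (hcp : c p = σ p) : Set.EqOn σ c (orbitOf A p) := by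
  rintro _ ⟨a, ha, rfl⟩
  calc σ (a p) = b (a p) := hbσ (apply_mem_orbitOf ha p)
    _ = a (b p) := by rw [← Equiv.Perm.mul_apply, hab b hb a ha, Equiv.Perm.mul_apply]
    _ = a (c p) := by rw [← hbσ (mem_orbitOf_self p), hcp]
    _ = c (a p) := by rw [← Equiv.Perm.mul_apply, hab a ha c hc, Equiv.Perm.mul_apply]

variable (A) in
/-- An identification of the `A`-orbit `O` with `∏ ZMod (order t)` under which every element of
`A` acts on `O` by a translation. -/
structure OrbitChart (O : Set X) where
  rank : ℕ
  order : Fin rank → ℕ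
  two_le_order : ∀ t, 2 ≤ order t
  point : (∀ t, ZMod (order t)) → X
  injective_point : Injective point
  range_point : Set.range point = O
  orbitOf_eq : ∀ x ∈ O, orbitOf A x = O
  exists_translation : ∀ a ∈ A, ∃ v, ∀ w, a (point w) = point (v + w)

open scoped IsMulCommutative in
/-- Since `A` is abelian, the orbit of `x₀` is a regular orbit of the finite abelian group
`A ⧸ stabilizer A x₀`. -/
theorem exists_orbitChart [Finite X] (hab : ∀ a ∈ A, ∀ b ∈ A, a * b = b * a) (x₀ : X) :
    Nonempty (OrbitChart A (orbitOf A x₀)) := by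
  have : IsMulCommutative A := ⟨⟨fun a b => Subtype.ext (hab _ a.2 _ b.2)⟩⟩
  let K := MulAction.stabilizer A x₀
  obtain ⟨r, n, hn, ⟨e⟩⟩ := AddCommGroup.exists_addEquiv_pi_zmod (Additive (A ⧸ K))
  let φ : A → ∀ t, ZMod (n t) := fun a => e (Additive.ofMul (a : A ⧸ K))
  have φ_mul (a b : A) : φ (a * b) = φ a + φ b := by
    simp only [φ, QuotientGroup.mk_mul, ofMul_mul, map_add]
  have φ_eq_iff (a b : A) : φ a = φ b ↔ (a : Equiv.Perm X) x₀ = (b : Equiv.Perm X) x₀ := by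
    rw [e.injective.eq_iff, Additive.ofMul.injective.eq_iff, QuotientGroup.eq,
      MulAction.mem_stabilizer_iff, mul_smul, inv_smul_eq_iff, eq_comm]
    rfl
  have hφ : Surjective φ := fun w => by
    obtain ⟨q, hq⟩ := e.surjective w
    obtain ⟨a, rfl⟩ := QuotientGroup.mk_surjective (Additive.toMul q)
    exact ⟨a, hq⟩
  let pt : (∀ t, ZMod (n t)) → X := fun w => ((surjInv hφ w : A) : Equiv.Perm X) x₀
  have pt_φ (a : A) : pt (φ a) = (a : Equiv.Perm X) x₀ := (φ_eq_iff _ _).1 (surjInv_eq hφ _)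
  refine ⟨⟨r, n, hn, pt, fun v w h => ?_, ?_, fun x hx => orbitOf_eq_of_mem hx, fun a ha => ?_⟩⟩
  · rw [← surjInv_eq hφ v, ← surjInv_eq hφ w]
    exact (φ_eq_iff _ _).2 h
  · ext x
    constructor
    · rintro ⟨w, rfl⟩
      exact ⟨_, (surjInv hφ w).2, rfl⟩
    · rintro ⟨a, ha, rfl⟩
      exact ⟨φ ⟨a, ha⟩, pt_φ _⟩
  · refine ⟨φ ⟨a, ha⟩, fun w => ?_⟩
    calc a (pt w) = ((⟨a, ha⟩ * surjInv hφ w : A) : Equiv.Perm X) x₀ := rfl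
      _ = pt (φ ⟨a, ha⟩ + w) := by rw [← pt_φ, φ_mul, surjInv_eq hφ]

namespace OrbitChart

variable {O : Set X} (P : OrbitChart A O)

theorem point_mem (w : ∀ t, ZMod (P.order t)) : P.point w ∈ O :=
  P.range_point.subset (Set.mem_range_self w)

noncomputable def coord (x : X) : ∀ t, ZMod (P.order t) := invFun P.point x

theorem coord_point (w : ∀ t, ZMod (P.order t)) : P.coord (P.point w) = w :=
  leftInverse_invFun P.injective_point w

theorem point_coord {x : X} (hx : x ∈ O) : P.point (P.coord x) = x :=
  invFun_eq (P.range_point.symm.subset hx)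

theorem apply_mem (P : OrbitChart A O) {a : Equiv.Perm X} (ha : a ∈ A) {x : X} (hx : x ∈ O) :
    a x ∈ O := by
  rw [← P.orbitOf_eq x hx]
  exact apply_mem_orbitOf ha x

theorem exists_translation_eq (v : ∀ t, ZMod (P.order t)) :
    ∃ a ∈ A, ∀ w, a (P.point w) = P.point (v + w) := by
  obtain ⟨a, ha, hav⟩ : P.point v ∈ orbitOf A (P.point 0) := by
    rw [P.orbitOf_eq _ (P.point_mem 0)]
    exact P.point_mem v
  obtain ⟨u, hu⟩ := P.exists_translation a ha
  have huv : u = v := by simpa using P.injective_point ((hu 0).symm.trans hav)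
  exact ⟨a, ha, huv ▸ hu⟩

end OrbitChart

end Orbits

def IsColDigraphAut {X : Type*} {k : ℕ} (γ : X → X → Fin k) (σ : Equiv.Perm X) : Prop :=
  ∀ x y, x ≠ y → γ (σ x) (σ y) = γ x y

section ChartColouring

variable {X Ω : Type*} {A : Subgroup (Equiv.Perm X)} {orb : X → Ω}
  (ch : ∀ ω, OrbitChart A (orb ⁻¹' {ω}))

def IsBasePair (x y : X) : Prop :=
  ∃ a ∈ A, a ((ch (orb x)).point 0) = x ∧ a ((ch (orb y)).point 0) = y

theorem orb_point (ω : Ω) (w : ∀ t, ZMod ((ch ω).order t)) : orb ((ch ω).point w) = ω :=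
  (ch ω).point_mem w

theorem orb_apply (ch : ∀ ω, OrbitChart A (orb ⁻¹' {ω})) {a : Equiv.Perm X} (ha : a ∈ A)
    (x : X) : orb (a x) = orb x :=
  (ch (orb x)).apply_mem ha rfl

theorem mem_orbitOf_iff (ch : ∀ ω, OrbitChart A (orb ⁻¹' {ω})) {x y : X} :
    y ∈ orbitOf A x ↔ orb y = orb x := by
  rw [(ch (orb x)).orbitOf_eq x rfl]
  rfl

theorem IsBasePair.symm {x y : X} (h : IsBasePair ch x y) : IsBasePair ch y x :=
  let ⟨a, ha, hx, hy⟩ := h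
  ⟨a, ha, hy, hx⟩

theorem isBasePair_point_zero (ω ω' : Ω) :
    IsBasePair ch ((ch ω).point 0) ((ch ω').point 0) :=
  ⟨1, A.one_mem, by rw [orb_point ch]; rfl, by rw [orb_point ch]; rfl⟩

theorem isBasePair_apply_iff {a : Equiv.Perm X} (ha : a ∈ A) {x y : X} :
    IsBasePair ch (a x) (a y) ↔ IsBasePair ch x y := by
  rw [IsBasePair, IsBasePair, orb_apply ch ha x, orb_apply ch ha y]
  constructor
  · rintro ⟨c, hc, hx, hy⟩
    refine ⟨a⁻¹ * c, A.mul_mem (A.inv_mem ha) hc, ?_, ?_⟩ <;> simp [Equiv.Perm.mul_apply, hx, hy]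
  · rintro ⟨c, hc, hx, hy⟩
    exact ⟨a * c, A.mul_mem ha hc, by simp [hx], by simp [hy]⟩

variable [LinearOrder Ω]

open Classical in
noncomputable def chartColouring (x y : X) : Fin 4 :=
  if orb x = orb y then
    cayleyColour (ch (orb x)).order ((ch (orb x)).coord y - (ch (orb x)).coord x)
  else if IsBasePair ch x y then (if orb x < orb y then 3 else 2) else 0

theorem chartColouring_of_orb_eq {ω : Ω} {x y : X} (hx : orb x = ω) (hy : orb y = ω) :
    chartColouring ch x y = cayleyColour (ch ω).order ((ch ω).coord y - (ch ω).coord x) := by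
  subst hx
  rw [chartColouring, if_pos hy.symm]

theorem chartColouring_point (ω : Ω) (v w : ∀ t, ZMod ((ch ω).order t)) :
    chartColouring ch ((ch ω).point v) ((ch ω).point w) = cayleyColour (ch ω).order (w - v) := by
  rw [chartColouring_of_orb_eq ch (orb_point ch ω v) (orb_point ch ω w),
    OrbitChart.coord_point, OrbitChart.coord_point]

open Classical in
theorem chartColouring_of_orb_ne {x y : X} (h : orb x ≠ orb y) :
    chartColouring ch x y = if IsBasePair ch x y then (if orb x < orb y then 3 else 2) else 0 := by
  rw [chartColouring, if_neg h]

theorem chartColouring_apply_apply {a : Equiv.Perm X} (ha : a ∈ A) (x y : X) :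
    chartColouring ch (a x) (a y) = chartColouring ch x y := by
  by_cases h : orb x = orb y
  · have key (ω : Ω) (v w : ∀ t, ZMod ((ch ω).order t)) :
        chartColouring ch (a ((ch ω).point v)) (a ((ch ω).point w)) =
          chartColouring ch ((ch ω).point v) ((ch ω).point w) := by
      obtain ⟨u, hu⟩ := (ch ω).exists_translation a ha
      rw [hu, hu, chartColouring_point ch, chartColouring_point ch, add_sub_add_left_eq_sub]
    simpa only [(ch (orb x)).point_coord (x := x) rfl, (ch (orb x)).point_coord (x := y) h.symm]
      using key (orb x) ((ch (orb x)).coord x) ((ch (orb x)).coord y)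
  · rw [chartColouring_of_orb_ne ch (by rwa [orb_apply ch ha, orb_apply ch ha]),
      chartColouring_of_orb_ne ch h, orb_apply ch ha, orb_apply ch ha, isBasePair_apply_iff ch ha]

/-- Inside an orbit the colours `3` and `2` of `w` and `-w` cannot occur together, so a pair
coloured `3` one way and `2` the other joins two orbits. -/
theorem chartColouring_eq_three_and_eq_two_iff {x y : X} :
    chartColouring ch x y = 3 ∧ chartColouring ch y x = 2 ↔ IsBasePair ch x y ∧ orb x < orb y := by
  by_cases h : orb x = orb y
  · refine iff_of_false (fun ⟨h3, h2⟩ => ?_) (fun ⟨_, hlt⟩ => hlt.ne h)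
    rw [chartColouring_of_orb_eq ch rfl h.symm] at h3
    rw [chartColouring_of_orb_eq ch h.symm rfl, ← neg_sub] at h2
    exact cayleyColour_neg_ne_two (ch (orb x)).two_le_order h3 h2
  rw [chartColouring_of_orb_ne ch h, chartColouring_of_orb_ne ch (Ne.symm h)]
  by_cases hb : IsBasePair ch x y
  · rw [if_pos hb, if_pos hb.symm]
    rcases lt_or_gt_of_ne h with hlt | hlt <;> simp [hb, hlt, hlt.not_gt]
  · rw [if_neg hb]
    simp [hb]

theorem isBasePair_of_chartColouring_ne_zero {x y : X} (h : orb x ≠ orb y)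
    (h0 : chartColouring ch x y ≠ 0) : IsBasePair ch x y := by
  rw [chartColouring_of_orb_ne ch h] at h0
  by_contra hb
  exact h0 (if_neg hb)

variable {ch} {σ : Equiv.Perm X}

theorem IsColDigraphAut.isBasePair_apply_and_lt_iff (hσ : IsColDigraphAut (chartColouring ch) σ)
    {x y : X} (hxy : x ≠ y) :
    IsBasePair ch (σ x) (σ y) ∧ orb (σ x) < orb (σ y) ↔ IsBasePair ch x y ∧ orb x < orb y := by
  rw [← chartColouring_eq_three_and_eq_two_iff, ← chartColouring_eq_three_and_eq_two_iff,
    hσ x y hxy, hσ y x hxy.symm]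

theorem IsColDigraphAut.orb_apply_eq_orb_apply (hσ : IsColDigraphAut (chartColouring ch) σ)
    {x y : X} (hxy : orb x = orb y) : orb (σ x) = orb (σ y) := by
  set P := ch (orb x)
  have key : ∀ v w, orb (σ (P.point v)) = orb (σ (P.point w)) := by
    refine eq_of_cayleyColour_ne_zero P.two_le_order fun v w hvw h0 => ?_
    have hpq : P.point v ≠ P.point w := P.injective_point.ne hvw
    have hp : orb (P.point v) = orb (P.point w) := by rw [orb_point ch, orb_point ch]
    by_contra hne
    have hb := isBasePair_of_chartColouring_ne_zero ch hne
      (by rwa [hσ _ _ hpq, chartColouring_point ch])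
    rcases lt_or_gt_of_ne hne with hlt | hlt
    · exact ((hσ.isBasePair_apply_and_lt_iff hpq).1 ⟨hb, hlt⟩).2.ne hp
    · exact ((hσ.isBasePair_apply_and_lt_iff hpq.symm).1 ⟨hb.symm, hlt⟩).2.ne hp.symm
  simpa only [P.point_coord (x := x) rfl, P.point_coord (x := y) hxy.symm]
    using key (P.coord x) (P.coord y)

/-- `σ` permutes the orbits monotonically, hence trivially. -/
theorem IsColDigraphAut.orb_apply_eq [Finite Ω] (hσ : IsColDigraphAut (chartColouring ch) σ)
    (x : X) : orb (σ x) = orb x := by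
  let τ : Ω → Ω := fun ω => orb (σ ((ch ω).point 0))
  have hτ : StrictMono τ := fun ω ω' hlt => by
    have hne : (ch ω).point 0 ≠ (ch ω').point 0 := fun h =>
      hlt.ne (by rw [← orb_point ch ω 0, h, orb_point ch])
    refine ((hσ.isBasePair_apply_and_lt_iff hne).2 ⟨isBasePair_point_zero ch ω ω', ?_⟩).2
    rwa [orb_point ch, orb_point ch]
  calc orb (σ x) = τ (orb x) := hσ.orb_apply_eq_orb_apply (orb_point ch _ 0).symm
    _ = orb x := hτ.apply_eq

theorem IsColDigraphAut.exists_mem_eqOn_orbitOf [Finite Ω]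
    (hσ : IsColDigraphAut (chartColouring ch) σ) (x : X) :
    ∃ b ∈ A, Set.EqOn σ b (orbitOf A x) := by
  set P := ch (orb x)
  let f : (∀ t, ZMod (P.order t)) → ∀ t, ZMod (P.order t) := fun w => P.coord (σ (P.point w))
  have point_f (w) : P.point (f w) = σ (P.point w) :=
    P.point_coord ((hσ.orb_apply_eq _).trans (orb_point ch _ w))
  have hf : Injective f := fun v w h =>
    P.injective_point (σ.injective (by rw [← point_f, h, point_f]))
  have hcol (v w) (hvw : v ≠ w) :
      cayleyColour P.order (f w - f v) = cayleyColour P.order (w - v) := by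
    rw [← chartColouring_point ch, point_f, point_f, hσ _ _ (P.injective_point.ne hvw),
      chartColouring_point ch]
  obtain ⟨b, hb, hbf⟩ := P.exists_translation_eq (f 0)
  refine ⟨b, hb, fun z hz => ?_⟩
  rw [mem_orbitOf_iff ch] at hz
  rw [← P.point_coord (x := z) hz, hbf, ← eq_add_of_cayleyColour P.two_le_order hf hcol, point_f]

theorem IsColDigraphAut.twoOrbitCompatible [Finite Ω] (hab : ∀ a ∈ A, ∀ b ∈ A, a * b = b * a)
    (hσ : IsColDigraphAut (chartColouring ch) σ) :
    TwoOrbitCompatible (A : Set (Equiv.Perm X)) σ := by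
  intro x y
  by_cases h : orb x = orb y
  · obtain ⟨b, hb, hbσ⟩ := hσ.exists_mem_eqOn_orbitOf x
    rw [orbitOf_eq_of_mem ((mem_orbitOf_iff ch).2 h.symm), Set.union_self]
    exact ⟨b, hb, hbσ⟩
  set p := (ch (orb x)).point 0
  set q := (ch (orb y)).point 0
  have hp : orb p = orb x := orb_point ch _ 0
  have hq : orb q = orb y := orb_point ch _ 0
  have hpq : p ≠ q := fun hpq => h (by rw [← hp, ← hq, hpq])
  obtain ⟨c, hc, hcp, hcq⟩ : IsBasePair ch (σ p) (σ q) := by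
    rcases lt_or_gt_of_ne (show orb p ≠ orb q by rwa [hp, hq]) with hlt | hlt
    · exact ((hσ.isBasePair_apply_and_lt_iff hpq).2 ⟨isBasePair_point_zero ch _ _, hlt⟩).1
    · exact ((hσ.isBasePair_apply_and_lt_iff hpq.symm).2
        ⟨isBasePair_point_zero ch _ _, hlt⟩).1.symm
  rw [hσ.orb_apply_eq, hp] at hcp
  rw [hσ.orb_apply_eq, hq] at hcq
  have eqOn (u : X) (hu : c ((ch (orb u)).point 0) = σ ((ch (orb u)).point 0)) :
      Set.EqOn σ c (orbitOf A u) := by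
    have hmem : (ch (orb u)).point 0 ∈ orbitOf A u := (mem_orbitOf_iff ch).2 (orb_point ch _ 0)
    obtain ⟨b, hb, hbσ⟩ := hσ.exists_mem_eqOn_orbitOf u
    rw [← orbitOf_eq_of_mem hmem] at hbσ ⊢
    exact eqOn_orbitOf_of_apply_eq hab hb hc hbσ hu
  exact ⟨c, hc, (eqOn x hcp).union (eqOn y hcq)⟩

end ChartColouring

theorem exists_colouring_twoOrbitCompatible {X : Type*} [Finite X] {A : Subgroup (Equiv.Perm X)}
    (hab : ∀ a ∈ A, ∀ b ∈ A, a * b = b * a) :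
    ∃ δ : X → X → Fin 4, (∀ a ∈ A, IsColDigraphAut δ a) ∧
      ∀ σ, IsColDigraphAut δ σ → TwoOrbitCompatible (A : Set (Equiv.Perm X)) σ := by
  let Ω := Quotient (Setoid.ker (orbitOf (A : Set (Equiv.Perm X))))
  let orb : X → Ω := Quotient.mk _
  have fibre_eq (ω : Ω) : orb ⁻¹' {ω} = orbitOf A ω.out := by
    ext x
    rw [Set.mem_preimage, Set.mem_singleton_iff, ← Quotient.out_eq ω, Quotient.eq, Setoid.ker_def,
      Quotient.out_eq, orbitOf_eq_iff_mem]
  let ch (ω : Ω) : OrbitChart A (orb ⁻¹' {ω}) := fibre_eq ω ▸ (exists_orbitChart hab ω.out).some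
  let : LinearOrder Ω := LinearOrder.lift' (Finite.equivFin Ω) (Finite.equivFin Ω).injective
  exact ⟨chartColouring ch, fun a ha x y _ => chartColouring_apply_apply ch ha x y,
    fun σ hσ => hσ.twoOrbitCompatible hab⟩

theorem twoOrbitClosed_of_inDGR {X : Type*} {A : Subgroup (Equiv.Perm X)} (h : InDGR A) :
    TwoOrbitClosed A := by
  obtain ⟨k, -, γ, hγ⟩ := h
  intro σ hσ
  refine (hγ σ).2 fun x y hxy => ?_
  obtain ⟨a, ha, hax⟩ := hσ x y
  rw [hax x (Or.inl (mem_orbitOf_self x)), hax y (Or.inr (mem_orbitOf_self y))]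
  exact (hγ a).1 ha x y hxy

theorem inDGR4_of_twoOrbitClosed {X : Type*} [Finite X] {A : Subgroup (Equiv.Perm X)}
    (hab : ∀ a ∈ A, ∀ b ∈ A, a * b = b * a) (h : TwoOrbitClosed A) : InDGR4 A := by
  obtain ⟨δ, hδA, hδ⟩ := exists_colouring_twoOrbitCompatible hab
  exact ⟨δ, fun σ => ⟨hδA σ, fun hσ => h σ (hδ σ hσ)⟩⟩

theorem statement3 (X : Type*) [Fintype X] (A : Subgroup (Equiv.Perm X))
    (hab : ∀ a ∈ A, ∀ b ∈ A, a * b = b * a) :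
    InDGR A ↔ InDGR4 A :=
  ⟨fun h => inDGR4_of_twoOrbitClosed hab (twoOrbitClosed_of_inDGR h),
    fun ⟨γ, hγ⟩ => ⟨4, by norm_num, γ, hγ⟩⟩
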